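/- Let k ≥ 1 be an integer. In the polynomial ring ℝ[X,Y], the polynomial (X^{2k} + Y^{2k})/2 − ((X+Y)/2)^{2k} is a sum of squares of polynomials. -/

import Mathlib

/-!
With `s = (x + y) / 2` and `d = (x - y) / 2` we have `x = s + d`, `y = s - d`, and in the binomial
expansion of `((s + d) ^ 2k + (s - d) ^ 2k) / 2` the odd powers of `d` cancel. What remains is
`s ^ 2k` plus `∑_{i < k} C(2k, 2i) (s ^ i d ^ (k - i)) ^ 2`, and a natural number times a square
is a sum of squares.
-/

open MvPolynomial

theorem IsSumSq.exists_eq_sum_sq {R : Type*} [CommSemiring R] {x : R} (hx : IsSumSq x) :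
    ∃ (m : ℕ) (q : Fin m → R), x = ∑ j, q j ^ 2 := by
  induction hx with
  | zero => exact ⟨0, Fin.elim0, by simp⟩
  | sq_add a _ ih =>
    obtain ⟨m, q, rfl⟩ := ih
    exact ⟨m + 1, Fin.cons a q, by simp [Fin.sum_univ_succ, sq]⟩

theorem Finset.sum_filter_even_range_two_mul_add_one {M : Type*} [AddCommMonoid M]
    (f : ℕ → M) (k : ℕ) :
    ∑ j ∈ (range (2 * k + 1)).filter Even, f j = ∑ i ∈ range (k + 1), f (2 * i) := by
  refine (sum_nbij' (2 * ·) (· / 2) ?_ ?_ ?_ ?_ ?_).symm <;>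
    simp [Nat.even_iff] <;> omega

theorem add_pow_add_sub_pow_two_mul {R : Type*} [CommRing R] (s d : R) (k : ℕ) :
    (s + d) ^ (2 * k) + (s - d) ^ (2 * k)
      = 2 * ∑ i ∈ Finset.range (k + 1),
          ((2 * k).choose (2 * i) : R) * (s ^ i * d ^ (k - i)) ^ 2 := by
  have hterm : ∀ j ∈ Finset.range (2 * k + 1),
      s ^ j * d ^ (2 * k - j) * (2 * k).choose j + s ^ j * (-d) ^ (2 * k - j) * (2 * k).choose j
        = if Even j then 2 * (s ^ j * d ^ (2 * k - j) * (2 * k).choose j) else 0 := by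
    intro j hj
    have hj : j ≤ 2 * k := Nat.lt_succ_iff.mp (Finset.mem_range.mp hj)
    split_ifs with heven
    · have : Even (2 * k - j) := (Nat.even_sub hj).2 (by simp [heven])
      rw [this.neg_pow]; ring
    · have : Odd (2 * k - j) := Nat.not_even_iff_odd.1 fun h => heven <| by
        simpa using (Nat.even_sub hj).1 h
      rw [this.neg_pow]; ring
  rw [add_pow, sub_eq_add_neg, add_pow, ← Finset.sum_add_distrib, Finset.sum_congr rfl hterm,
    ← Finset.sum_filter, Finset.sum_filter_even_range_two_mul_add_one, Finset.mul_sum]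
  refine Finset.sum_congr rfl fun i hi => ?_
  have hi : i ≤ k := Nat.lt_succ_iff.mp (Finset.mem_range.mp hi)
  rw [show 2 * k - 2 * i = 2 * (k - i) by omega, pow_mul, pow_mul]
  ring

theorem mul_add_pow_sub_mul_add_pow {R : Type*} [CommRing R] {c : R} (hc : c * 2 = 1)
    (x y : R) (k : ℕ) :
    c * (x ^ (2 * k) + y ^ (2 * k)) - (c * (x + y)) ^ (2 * k)
      = ∑ i ∈ Finset.range k,
          ((2 * k).choose (2 * i) : R) * ((c * (x + y)) ^ i * (c * (x - y)) ^ (k - i)) ^ 2 := by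
  set s := c * (x + y)
  set d := c * (x - y)
  have hx : x = s + d := by linear_combination (-x) * hc
  have hy : y = s - d := by linear_combination (-y) * hc
  rw [hx, hy, add_pow_add_sub_pow_two_mul, Finset.sum_range_succ]
  simp only [Nat.choose_self, Nat.sub_self, pow_zero, mul_one, Nat.cast_one, one_mul]
  rw [← pow_mul, mul_comm k 2]
  linear_combination (∑ i ∈ Finset.range k,
    ((2 * k).choose (2 * i) : R) * (s ^ i * d ^ (k - i)) ^ 2 + s ^ (2 * k)) * hc

theorem isSumSq_mul_add_pow_sub_mul_add_pow {R : Type*} [CommRing R] {c : R} (hc : c * 2 = 1)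
    (x y : R) (k : ℕ) :
    IsSumSq (c * (x ^ (2 * k) + y ^ (2 * k)) - (c * (x + y)) ^ (2 * k)) := by
  rw [mul_add_pow_sub_mul_add_pow hc]
  exact IsSumSq.sum fun i _ => (IsSumSq.natCast _).mul (IsSquare.sq _).isSumSq

theorem stmt_15 (k : ℕ) :
    ∃ (m : ℕ) (q : Fin m → MvPolynomial (Fin 2) ℝ),
      C (1/2 : ℝ) * ((X 0)^(2*k) + (X 1)^(2*k))
        - (C (1/2 : ℝ) * (X 0 + X 1))^(2*k)
      = ∑ j, (q j)^2 := by
  have hc : (C (1 / 2 : ℝ) : MvPolynomial (Fin 2) ℝ) * 2 = 1 := by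
    rw [← map_ofNat C 2, ← C_mul]; norm_num
  exact (isSumSq_mul_add_pow_sub_mul_add_pow hc _ _ k).exists_eq_sum_sq
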